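/- arXiv:1602.04417 — 3 statements merged into one kernel-verified Lean document; each statement's English description precedes it below -/
import Mathlib

section
/- For every element x of a topological group G and every integer n ≥ 1, the contraction subgroup of xⁿ equals the contraction subgroup of x: con(xⁿ) = con(x). -/
/-!
Along the subsequence `k = n * q` the conjugates by `x ^ k` are the conjugates by `(x ^ n) ^ q`,
which gives `con x ⊆ con (x ^ n)`. Conversely, along each residue class `k = n * q + r` the
conjugate by `x ^ k` is the conjugate by `(x ^ n) ^ q` followed by conjugation by the fixed
element `x ^ r`, which is continuous and fixes `1`; finitely many residue classes cover `ℕ`.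
-/

open Filter Topology

theorem Filter.Tendsto.atTop_of_arithmetic {α : Type*} {l : Filter α} {f : ℕ → α} {n : ℕ}
    (hn : n ≠ 0) (h : ∀ r < n, Tendsto (fun q => f (n * q + r)) atTop l) :
    Tendsto f atTop l :=
  fun _ hs => Eventually.atTop_of_arithmetic hn fun r hr => h r hr hs

section Contraction

variable {G : Type*} [Group G]

theorem conj_pow_mul_add (x g : G) (n q r : ℕ) :
    x ^ (n * q + r) * g * x⁻¹ ^ (n * q + r) =
      x ^ r * ((x ^ n) ^ q * g * (x ^ n)⁻¹ ^ q) * x⁻¹ ^ r := by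
  rw [pow_add, pow_add, pow_mul, pow_mul, inv_pow, inv_pow]
  group

variable [TopologicalSpace G]

def contractionSet (y : G) : Set G :=
  {g | Tendsto (fun k : ℕ => y ^ k * g * y⁻¹ ^ k) atTop (𝓝 1)}

theorem contractionSet_subset_pow (x : G) {n : ℕ} (hn : n ≠ 0) :
    contractionSet x ⊆ contractionSet (x ^ n) := by
  intro g hg
  have hsub : Tendsto (n * ·) atTop atTop :=
    (strictMono_mul_left_of_pos (Nat.pos_of_ne_zero hn)).tendsto_atTop
  refine (hg.comp hsub).congr fun q => ?_
  simpa using conj_pow_mul_add x g n q 0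

theorem contractionSet_pow_subset [ContinuousMul G] (x : G) {n : ℕ} (hn : n ≠ 0) :
    contractionSet (x ^ n) ⊆ contractionSet x := by
  intro g hg
  refine Tendsto.atTop_of_arithmetic hn fun r _ => ?_
  have hfix : x ^ r * 1 * x⁻¹ ^ r = 1 := by rw [mul_one, inv_pow, mul_inv_cancel]
  simpa only [conj_pow_mul_add, hfix] using (hg.const_mul (x ^ r)).mul_const (x⁻¹ ^ r)

theorem contractionSet_pow [ContinuousMul G] (x : G) {n : ℕ} (hn : n ≠ 0) :
    contractionSet (x ^ n) = contractionSet x :=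
  (contractionSet_pow_subset x hn).antisymm (contractionSet_subset_pow x hn)

end Contraction

/-- con(xⁿ) = con(x) for every n ≥ 1. -/
theorem contraction_pow {G : Type*} [Group G] [TopologicalSpace G]
    [IsTopologicalGroup G] (x : G) (n : ℕ) (hn : 1 ≤ n) :
    {g : G | Filter.Tendsto (fun k : ℕ => (x ^ n) ^ k * g * ((x ^ n)⁻¹) ^ k)
      Filter.atTop (nhds 1)} =
    {g : G | Filter.Tendsto (fun k : ℕ => x ^ k * g * x⁻¹ ^ k)
      Filter.atTop (nhds 1)} :=
  contractionSet_pow x (Nat.one_le_iff_ne_zero.mp hn)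
end

section
/- If x ∈ G normalizes a compact open subgroup V and xⁿ lies in a compact subgroup K containing V for some n ≥ 1, then the cyclic subgroup generated by x has compact closure. -/
open scoped Pointwise

open Subgroup in
theorem Subgroup.coe_zpowers_subset_iUnion_pow_smul {G : Type*} [Group G] (x : G) {n : ℕ}
    (hn : 0 < n) :
    (zpowers x : Set G) ⊆ ⋃ i ∈ Finset.range n, x ^ i • (zpowers (x ^ n) : Set G) := by
  rintro _ ⟨m, rfl⟩
  have hn' : (0 : ℤ) < n := by exact_mod_cast hn
  lift m % n to ℕ using Int.emod_nonneg m hn'.ne' with r hr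
  have hrn : r < n := by exact_mod_cast hr ▸ Int.emod_lt_of_pos m hn'
  refine Set.mem_biUnion (Finset.mem_range.2 hrn) ⟨(x ^ n) ^ (m / n), zpow_mem_zpowers _ _, ?_⟩
  simp only [smul_eq_mul, ← zpow_natCast, ← zpow_mul, ← zpow_add, hr, Int.emod_add_mul_ediv]

theorem isCompact_closure_zpowers_of_pow_mem {G : Type*} [Group G] [TopologicalSpace G]
    [IsTopologicalGroup G] {K : Subgroup G} (hK : IsCompact (K : Set G)) {x : G} {n : ℕ}
    (hn : 0 < n) (hxn : x ^ n ∈ K) :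
    IsCompact (closure (Subgroup.zpowers x : Set G)) := by
  have hcover : IsCompact (⋃ i ∈ Finset.range n, x ^ i • (K : Set G)) :=
    (Finset.range n).finite_toSet.isCompact_biUnion fun i _ => hK.smul (x ^ i)
  -- topological groups are regular, so the closure of a compact set is compact
  refine hcover.closure.of_isClosed_subset isClosed_closure (closure_mono ?_)
  refine (Subgroup.coe_zpowers_subset_iUnion_pow_smul x hn).trans ?_
  gcongr
  exact (Subgroup.zpowers_le.2 hxn : _)

theorem cyclic_precompact_general {G : Type*} [Group G] [TopologicalSpace G]
    [IsTopologicalGroup G] (K : Subgroup G) (hKc : IsCompact (K : Set G))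
    (x : G) (n : ℕ) (hn : 1 ≤ n) (hxn : x ^ n ∈ K) :
    IsCompact (closure ((Subgroup.zpowers x : Subgroup G) : Set G)) :=
  isCompact_closure_zpowers_of_pow_mem hKc hn hxn

/-- If x normalizes a compact open subgroup V and xⁿ lies in a compact
subgroup K containing V, then ⟨x⟩ has compact closure. -/
theorem cyclic_precompact {G : Type*} [Group G] [TopologicalSpace G]
    [IsTopologicalGroup G] [T2Space G]
    (V K : Subgroup G) (hVc : IsCompact (V : Set G)) (hVo : IsOpen (V : Set G))
    (hKc : IsCompact (K : Set G)) (hVK : V ≤ K)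
    (x : G) (hnorm : MulAut.conj x • V = V) (n : ℕ) (hn : 1 ≤ n) (hxn : x ^ n ∈ K) :
    IsCompact (closure ((Subgroup.zpowers x : Subgroup G) : Set G)) :=
  cyclic_precompact_general K hKc x n hn hxn
end

section
/- Let G be a group, V a subgroup with x ∈ G such that V = V₊V₋ where V₊ = ⋂_{n≥0} xⁿVx⁻ⁿ and V₋ = ⋂_{n≥0} x⁻ⁿVxⁿ. Then for every n ≥ 1, (VxV)ⁿ ⊆ V xⁿ V₊ V₋ = V xⁿ V. -/
open scoped Pointwise
/-- If V = V₊V₋ (tidy factoring) then (VxV)ⁿ ⊆ V xⁿ V for every n ≥ 1. -/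
theorem doubleCoset_pow {G : Type*} [Group G] (V : Subgroup G) (x : G)
    (hfact : ∀ v ∈ V,
      ∃ vp ∈ ⋂ n : ℕ, (fun g : G => x ^ n * g * x⁻¹ ^ n) '' (V : Set G),
      ∃ vm ∈ ⋂ n : ℕ, (fun g : G => x⁻¹ ^ n * g * x ^ n) '' (V : Set G),
        v = vp * vm) :
    ∀ n : ℕ, 1 ≤ n →
      ((V : Set G) * ({x} : Set G) * (V : Set G)) ^ n ⊆
        (V : Set G) * ({x ^ n} : Set G) * (V : Set G) := by
  intro n hn
  induction n, hn using Nat.le_induction with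
  | base => rw [pow_one, pow_one]
  | succ n hn ih =>
    rw [pow_succ]
    rintro a ⟨y, hy, z, hz, rfl⟩
    obtain ⟨p, hp, b₁, hb₁, rfl⟩ := ih hy
    obtain ⟨a₁, ha₁, s, hs, rfl⟩ := hp
    obtain ⟨q, hq, d, hd, rfl⟩ := hz
    obtain ⟨c, hc, t, ht, rfl⟩ := hq
    rw [Set.mem_singleton_iff] at hs ht
    rw [hs, ht]
    have hv : (b₁ * c)⁻¹ ∈ V := inv_mem (mul_mem hb₁ hc)
    obtain ⟨vp, hvp, vm, hvm, hfac⟩ := hfact _ hv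
    simp only [Set.mem_iInter, Set.mem_image, SetLike.mem_coe] at hvp hvm
    obtain ⟨u, hu, hu'⟩ := hvp 1
    obtain ⟨w, hw, hw'⟩ := hvm n
    have hbc : b₁ * c = vm⁻¹ * vp⁻¹ := by
      have := congrArg Inv.inv hfac
      simpa [mul_inv_rev] using this
    refine ⟨a₁ * w⁻¹ * x ^ (n + 1), ⟨a₁ * w⁻¹, mul_mem ha₁ (inv_mem hw),
      x ^ (n + 1), rfl, rfl⟩, u⁻¹ * d, mul_mem (inv_mem hu) hd, ?_⟩
    show a₁ * w⁻¹ * x ^ (n + 1) * (u⁻¹ * d) = a₁ * x ^ n * b₁ * (c * x * d)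
    rw [show a₁ * x ^ n * b₁ * (c * x * d) = a₁ * x ^ n * (b₁ * c) * (x * d) by group, hbc,
      ← hu', ← hw']
    group
end
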